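/- Let ρ be a density matrix on ℂ^d and A, B Hermitian d×d complex matrices. Then ΔA² + ΔB² ≥ |Tr(ρ[A,B])|, where |·| is the complex modulus (the trace Tr(ρ[A,B]) is purely imaginary). -/

import Mathlib

/-!
Center the observables: `X = A - ⟨A⟩` and `Y = B - ⟨B⟩` have the same commutator as `A, B`, and
`Tr(ρ X²) = ΔA²`, `Tr(ρ Y²) = ΔB²`. Positivity of `ρ` gives `0 ≤ Tr(ρ Mᴴ M)` for
`M = X ± iY`, and `Mᴴ M = X² + Y² ± i[X, Y]`. Since `Tr(ρ[X, Y])` is purely imaginary, the two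
signs together bound its modulus by `ΔA² + ΔB²`.
-/

open Matrix Complex
open scoped ComplexOrder

namespace Matrix

variable {n : Type*} [Fintype n]

lemma PosSemidef.trace_mul_conjTranspose_mul_self_nonneg {ρ : Matrix n n ℂ} (hρ : ρ.PosSemidef)
    (M : Matrix n n ℂ) : 0 ≤ (ρ * (Mᴴ * M)).trace := by
  rw [← Matrix.mul_assoc, trace_mul_comm, ← Matrix.mul_assoc]
  exact (hρ.mul_mul_conjTranspose_same M).trace_nonneg

lemma IsHermitian.star_trace_mul {ρ : Matrix n n ℂ} (hρ : ρ.IsHermitian) (X : Matrix n n ℂ) :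
    star (ρ * X).trace = (ρ * Xᴴ).trace := by
  rw [← trace_conjTranspose, conjTranspose_mul, hρ.eq, trace_mul_comm]

lemma IsHermitian.isSelfAdjoint_trace_mul {ρ A : Matrix n n ℂ} (hρ : ρ.IsHermitian)
    (hA : A.IsHermitian) : IsSelfAdjoint (ρ * A).trace := by
  rw [IsSelfAdjoint, hρ.star_trace_mul, hA.eq]

lemma IsHermitian.star_trace_mul_commutator {ρ X Y : Matrix n n ℂ} (hρ : ρ.IsHermitian)
    (hX : X.IsHermitian) (hY : Y.IsHermitian) :
    star (ρ * (X * Y - Y * X)).trace = -(ρ * (X * Y - Y * X)).trace := by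
  rw [hρ.star_trace_mul, conjTranspose_sub, conjTranspose_mul, conjTranspose_mul, hX.eq, hY.eq,
    ← neg_sub (X * Y), Matrix.mul_neg, trace_neg]

lemma IsHermitian.re_trace_mul_commutator {ρ X Y : Matrix n n ℂ} (hρ : ρ.IsHermitian)
    (hX : X.IsHermitian) (hY : Y.IsHermitian) : (ρ * (X * Y - Y * X)).trace.re = 0 := by
  have h := congrArg re (hρ.star_trace_mul_commutator hX hY)
  rw [star_def, conj_re, neg_re] at h
  linarith

lemma PosSemidef.trace_mul_sq_add_sq_add_I_mul_commutator_nonneg {ρ X Y : Matrix n n ℂ}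
    (hρ : ρ.PosSemidef) (hX : X.IsHermitian) (hY : Y.IsHermitian) :
    0 ≤ (ρ * (X * X)).trace + (ρ * (Y * Y)).trace + I * (ρ * (X * Y - Y * X)).trace := by
  have hM : (X + I • Y)ᴴ * (X + I • Y) = X * X + Y * Y + I • (X * Y - Y * X) := by
    rw [conjTranspose_add, conjTranspose_smul, hX.eq, hY.eq, star_def, conj_I]
    simp only [Matrix.add_mul, Matrix.mul_add, smul_mul_assoc, mul_smul_comm, neg_mul, neg_smul]
    linear_combination (norm := module) -I_sq • (Y * Y)
  have h := hρ.trace_mul_conjTranspose_mul_self_nonneg (X + I • Y)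
  rwa [hM, Matrix.mul_add, Matrix.mul_add, trace_add, trace_add, Matrix.mul_smul,
    trace_smul, smul_eq_mul] at h

lemma PosSemidef.norm_trace_mul_commutator_le {ρ X Y : Matrix n n ℂ} (hρ : ρ.PosSemidef)
    (hX : X.IsHermitian) (hY : Y.IsHermitian) :
    ‖(ρ * (X * Y - Y * X)).trace‖ ≤ (ρ * (X * X)).trace.re + (ρ * (Y * Y)).trace.re := by
  have hXY := re_le_re (hρ.trace_mul_sq_add_sq_add_I_mul_commutator_nonneg hX hY)
  have hYX := re_le_re (hρ.trace_mul_sq_add_sq_add_I_mul_commutator_nonneg hY hX)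
  rw [← neg_sub, Matrix.mul_neg, trace_neg] at hYX
  simp only [zero_re, add_re, I_mul_re, neg_im] at hXY hYX
  rw [← abs_im_eq_norm.mpr (hρ.isHermitian.re_trace_mul_commutator hX hY)]
  exact abs_le.mpr ⟨by linarith, by linarith⟩

variable [DecidableEq n]

lemma trace_mul_sub_trace_smul_one_sq {ρ : Matrix n n ℂ} (hρtr : ρ.trace = 1)
    (A : Matrix n n ℂ) :
    (ρ * ((A - (ρ * A).trace • 1) * (A - (ρ * A).trace • 1))).trace
      = (ρ * (A * A)).trace - (ρ * A).trace ^ 2 := by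
  simp only [Matrix.sub_mul, Matrix.mul_sub, Matrix.smul_mul, Matrix.mul_smul, Matrix.one_mul,
    Matrix.mul_one, trace_sub, trace_smul, hρtr, smul_eq_mul]
  ring

lemma commutator_sub_smul_one (A B : Matrix n n ℂ) (a b : ℂ) :
    (A - a • 1) * (B - b • 1) - (B - b • 1) * (A - a • 1) = A * B - B * A := by
  simp only [Matrix.sub_mul, Matrix.mul_sub, Matrix.smul_mul, Matrix.mul_smul, Matrix.one_mul,
    Matrix.mul_one]
  module

end Matrix

theorem stmt2 {d : ℕ} (ρ : Matrix (Fin d) (Fin d) ℂ)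
    (hρ : ρ.PosSemidef) (hρtr : ρ.trace = 1)
    (A B : Matrix (Fin d) (Fin d) ℂ) (hA : A.IsHermitian) (hB : B.IsHermitian) :
    (((ρ * (A * A)).trace - (ρ * A).trace ^ 2).re
      + ((ρ * (B * B)).trace - (ρ * B).trace ^ 2).re)
      ≥ ‖(ρ * (A * B - B * A)).trace‖
    ∧ ((ρ * (A * B - B * A)).trace).re = 0 := by
  have hcenter (C : Matrix (Fin d) (Fin d) ℂ) (hC : C.IsHermitian) :
      (C - (ρ * C).trace • 1).IsHermitian :=
    hC.sub (isHermitian_one.smul (hρ.isHermitian.isSelfAdjoint_trace_mul hC))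
  refine ⟨?_, hρ.isHermitian.re_trace_mul_commutator hA hB⟩
  have h := hρ.norm_trace_mul_commutator_le (hcenter A hA) (hcenter B hB)
  rwa [commutator_sub_smul_one, trace_mul_sub_trace_smul_one_sq hρtr,
    trace_mul_sub_trace_smul_one_sq hρtr] at h
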